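/- arXiv:1805.11297 — 9 statements merged into one kernel-verified Lean document; each statement's English description precedes it below -/
import Mathlib

section
/- If the execution lengths are chosen optimally, i.e., ℓ_j = w_j·((α-1)/Σ_{k=j}^n p_k)^(1/α), then the value A = Σ_j w_j^α ℓ_j^(1-α) + Σ_j p_j Σ_{k≤j} ℓ_k equals α(α-1)^{(1-α)/α} · Σ_{j=1}^n w_j (Σ_{k=j}^n p_k)^{(α-1)/α}. -/
/-!
Exchanging the order of summation writes the flow time as `∑ k, P k * ℓ k` with
`P k = ∑ j ≥ k, p j`, so the objective splits into the per-job costs `w ^ α * ℓ ^ (1 - α) + P * ℓ`.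
At the optimal length, `ℓ ^ α = (α - 1) * w ^ α / P`, the energy term equals `P * ℓ / (α - 1)`,
so each job costs `α / (α - 1) * P * ℓ`.
-/

open Real Finset

theorem Finset.sum_mul_sum_Iic_eq_sum_sum_Ici_mul {ι R : Type*} [Fintype ι] [LinearOrder ι]
    [LocallyFiniteOrderBot ι] [LocallyFiniteOrderTop ι] [NonUnitalNonAssocSemiring R] (p ℓ : ι → R) :
    ∑ j, p j * ∑ k ∈ Iic j, ℓ k = ∑ k, (∑ j ∈ Ici k, p j) * ℓ k := by
  simp_rw [mul_sum, sum_mul]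
  exact sum_comm' fun j k => by simp

theorem energy_add_flow_at_optimal_length {α w P : ℝ} (hα : 1 < α) (hw : 0 < w) (hP : 0 < P) :
    w ^ α * (w * ((α - 1) / P) ^ (1 / α)) ^ (1 - α) + P * (w * ((α - 1) / P) ^ (1 / α))
      = α * (α - 1) ^ ((1 - α) / α) * (w * P ^ ((α - 1) / α)) := by
  have hc : 0 < α - 1 := sub_pos.mpr hα
  have hα0 : α ≠ 0 := by positivity
  set t := ((α - 1) / P) ^ (1 / α) with ht_def
  have ht : 0 < t := by positivity
  have htα : t ^ α = (α - 1) / P := by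
    rw [ht_def, one_div, rpow_inv_rpow (by positivity) hα0]
  have henergy : w ^ α * (w * t) ^ (1 - α) = w * t * P / (α - 1) := by
    rw [mul_rpow hw.le ht.le, ← mul_assoc, ← rpow_add hw, rpow_sub ht, htα]
    field_simp
    simp
  have hscale : t * P / (α - 1) = (α - 1) ^ ((1 - α) / α) * P ^ ((α - 1) / α) := by
    have h1 : (1 - α) / α = 1 / α - 1 := by field_simp
    have h2 : (α - 1) / α = 1 - 1 / α := by field_simp
    rw [ht_def, div_rpow hc.le hP.le, h1, h2, rpow_sub_one hc.ne', rpow_sub hP, rpow_one]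
    field_simp
  calc w ^ α * (w * t) ^ (1 - α) + P * (w * t)
      = α * w * (t * P / (α - 1)) := by rw [henergy]; field_simp; ring
    _ = α * (α - 1) ^ ((1 - α) / α) * (w * P ^ ((α - 1) / α)) := by rw [hscale]; ring

theorem stmt4 (n : ℕ) (α : ℝ) (hα : 1 < α) (w p : Fin n → ℝ)
    (hw : ∀ j, 0 < w j) (hp : ∀ j, 0 < p j)
    (ℓ : Fin n → ℝ)
    (hℓ : ∀ j, ℓ j = w j * ((α - 1) / ∑ k ∈ Finset.Ici j, p k) ^ (1/α)) :
    ∑ j, (w j) ^ α * (ℓ j) ^ (1 - α) + ∑ j, p j * ∑ k ∈ Finset.Iic j, ℓ k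
      = α * (α - 1) ^ ((1 - α)/α) * ∑ j, w j * (∑ k ∈ Finset.Ici j, p k) ^ ((α - 1)/α) := by
  rw [sum_mul_sum_Iic_eq_sum_sum_Ici_mul, ← sum_add_distrib, mul_sum]
  refine sum_congr rfl fun j _ => ?_
  have hP : 0 < ∑ k ∈ Ici j, p k := sum_pos (fun k _ => hp k) ⟨j, mem_Ici.mpr le_rfl⟩
  rw [hℓ j]
  exact energy_add_flow_at_optimal_length hα (hw j) hP
end

section
/- Minimizing over all positive ℓ, min_ℓ A_{w,p}(π,ℓ) = α(α-1)^((1-α)/α) · B_{w,p}(σ), where σ is the reverse order of π, B_{w,p}(σ) = Σ_j w_j C_j^{(α-1)/α}, and C_j under σ is the sum of p_i over jobs i with σ(i) ≤ σ(j). -/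
/-!
Exchanging the order of summation, the penalty term charges the length of job `i` with
`C i = ∑_{j : π i ≤ π j} p j`, its completion time under the reversed order `σ`. Hence
`A ℓ = ∑ j, (w j ^ α * ℓ j ^ (1 - α) + C j * ℓ j)` separates into one-variable problems, and
weighted AM–GM shows that `w ^ α * x ^ (1 - α) + c * x` has minimum
`α * (α - 1) ^ ((1 - α) / α) * w * c ^ ((α - 1) / α)` over `x > 0`, attained at
`x = ((α - 1) * w ^ α / c) ^ (1 / α)`.
-/

open Real Finset

lemma le_rpow_one_sub_add_sub_one_mul {α u : ℝ} (hα : 1 < α) (hu : 0 < u) :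
    α ≤ u ^ (1 - α) + (α - 1) * u := by
  have hα0 : 0 < α := by linarith
  have amgm := geom_mean_le_arith_mean2_weighted (w₁ := 1 / α) (w₂ := (α - 1) / α)
    (p₁ := u ^ (1 - α)) (p₂ := u) (by positivity) (div_nonneg (by linarith) hα0.le)
    (rpow_nonneg hu.le _) hu.le (by field_simp; ring)
  have hgeom : (u ^ (1 - α)) ^ (1 / α) * u ^ ((α - 1) / α) = 1 := by
    rw [← rpow_mul hu.le, ← rpow_add hu]
    convert rpow_zero u using 2
    field_simp
    ring
  rw [hgeom] at amgm
  have : α * (1 / α * u ^ (1 - α) + (α - 1) / α * u) = u ^ (1 - α) + (α - 1) * u := by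
    field_simp
  nlinarith

lemma isLeast_rpow_one_sub_add_mul {α w c : ℝ} (hα : 1 < α) (hw : 0 < w) (hc : 0 < c) :
    IsLeast ((fun x => w ^ α * x ^ (1 - α) + c * x) '' Set.Ioi 0)
      (α * (α - 1) ^ ((1 - α) / α) * (w * c ^ ((α - 1) / α))) := by
  have hα0 : 0 < α := by linarith
  have hα1 : 0 < α - 1 := by linarith
  -- `s` is the minimiser; substituting `x = s * u` turns the objective into
  -- `K * (u ^ (1 - α) + (α - 1) * u)`.
  obtain ⟨s, hs_def⟩ : ∃ s, s = ((α - 1) * w ^ α / c) ^ (1 / α) := ⟨_, rfl⟩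
  have hs : 0 < s := hs_def ▸ by positivity
  obtain ⟨K, hK_def⟩ : ∃ K, K = (α - 1) ^ ((1 - α) / α) * (w * c ^ ((α - 1) / α)) := ⟨_, rfl⟩
  have hwK : w ^ α * s ^ (1 - α) = K := by
    rw [hs_def, hK_def, ← rpow_mul (by positivity), div_rpow (by positivity) hc.le,
      mul_rpow hα1.le (by positivity), ← rpow_mul hw.le,
      show α * (1 / α * (1 - α)) = 1 - α by field_simp, div_eq_mul_inv, ← rpow_neg hc.le,
      show -(1 / α * (1 - α)) = (α - 1) / α by ring, one_div_mul_eq_div]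
    have : w ^ α * w ^ (1 - α) = w := by rw [← rpow_add hw]; simp
    linear_combination (α - 1) ^ ((1 - α) / α) * c ^ ((α - 1) / α) * this
  have hcK : c * s = (α - 1) * K := by
    have hsα : s ^ α = (α - 1) * w ^ α / c := by
      rw [hs_def, ← rpow_mul (by positivity), one_div_mul_cancel hα0.ne', rpow_one]
    have : s = s ^ α * s ^ (1 - α) := by rw [← rpow_add hs]; simp
    rw [this, hsα, ← hwK]
    field_simp
  refine ⟨⟨s, hs, ?_⟩, ?_⟩
  · dsimp only
    rw [hwK, hcK, hK_def]
    ring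
  · rintro _ ⟨x, hx, rfl⟩
    have hu : 0 < x / s := div_pos hx hs
    have key := mul_le_mul_of_nonneg_left (le_rpow_one_sub_add_sub_one_mul hα hu)
      (show 0 ≤ K from hK_def ▸ by positivity)
    have hx_eq : x = s * (x / s) := by field_simp
    calc α * (α - 1) ^ ((1 - α) / α) * (w * c ^ ((α - 1) / α))
        = K * α := by rw [hK_def]; ring
      _ ≤ K * ((x / s) ^ (1 - α) + (α - 1) * (x / s)) := key
      _ = w ^ α * (s * (x / s)) ^ (1 - α) + c * (s * (x / s)) := by
          rw [mul_rpow hs.le hu.le, ← mul_assoc, hwK, ← mul_assoc c, hcK]; ring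
      _ = _ := by rw [← hx_eq]

lemma isLeast_image_sum {ι X M : Type*} [Fintype ι] [AddCommMonoid M] [PartialOrder M]
    [IsOrderedAddMonoid M] {f : ι → X → M} {S : Set X} {m : ι → M}
    (h : ∀ i, IsLeast (f i '' S) (m i)) :
    IsLeast ((fun x : ι → X => ∑ i, f i (x i)) '' {x | ∀ i, x i ∈ S}) (∑ i, m i) := by
  choose x hxS hfx using fun i => (h i).1
  refine ⟨⟨x, hxS, sum_congr rfl fun i _ => hfx i⟩, ?_⟩
  rintro _ ⟨y, hy, rfl⟩
  exact sum_le_sum fun i _ => (h i).2 ⟨y i, hy i, rfl⟩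

lemma sum_mul_sum_filter_comm {ι R : Type*} [Fintype ι] [NonUnitalNonAssocSemiring R]
    (r : ι → ι → Prop) [DecidableRel r] (p ℓ : ι → R) :
    ∑ j, p j * ∑ i ∈ univ.filter (fun i => r i j), ℓ i
      = ∑ i, (∑ j ∈ univ.filter (fun j => r i j), p j) * ℓ i := by
  simp_rw [sum_filter, mul_sum, sum_mul, mul_ite, ite_mul, mul_zero, zero_mul]
  exact sum_comm

/-- Theorem 1 of the paper: for a fixed order `π`, the minimum over positive
length vectors of `A_{w,p}(ord,ℓ)` equals `α(α-1)^((1-α)/α) · B_{w,p}(σ)` where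
`σ` is the reverse of `π`. Under `σ`, the completion time of job `j` is
`C j = ∑_{i : ord i ≥ ord j} p i`. -/
theorem stmt5 (n : ℕ) (α : ℝ) (hα : 1 < α) (w p : Fin n → ℝ)
    (hw : ∀ j, 0 < w j) (hp : ∀ j, 0 < p j)
    (ord : Equiv.Perm (Fin n))
    (A : (Fin n → ℝ) → ℝ)
    (hA : A = fun ℓ => ∑ j, (w j) ^ α * (ℓ j) ^ (1 - α)
        + ∑ j, p j * ∑ i ∈ Finset.univ.filter (fun i => ord i ≤ ord j), ℓ i)
    (C : Fin n → ℝ)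
    (hC : ∀ j, C j = ∑ i ∈ Finset.univ.filter (fun i => ord j ≤ ord i), p i)
    (B : ℝ) (hB : B = ∑ j, w j * (C j) ^ ((α - 1)/α)) :
    IsLeast (A '' {ℓ : Fin n → ℝ | ∀ j, 0 < ℓ j})
      (α * (α - 1) ^ ((1 - α)/α) * B) := by
  have hC_pos : ∀ j, 0 < C j := fun j => hC j ▸ sum_pos (fun i _ => hp i) ⟨j, by simp⟩
  have hA_sep : A = fun ℓ => ∑ j, (w j ^ α * ℓ j ^ (1 - α) + C j * ℓ j) := by
    funext ℓ
    simp_rw [hA, sum_add_distrib, sum_mul_sum_filter_comm, hC]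
  rw [hA_sep, hB, mul_sum]
  exact isLeast_image_sum fun j => isLeast_rpow_one_sub_add_mul hα (hw j) (hC_pos j)
end

section
/- At the optimal lengths, the energy of job j satisfies s_j^α ℓ_j = (w_j/(α-1)^{1-1/α})·(Σ_{k=j}^n p_k)^{1-1/α}, and consequently ∂(s_k^α ℓ_k)/∂p_i = ℓ_k/α for every k ≤ i (where indices refer to the processing order). -/
open Real Finset

section OptimalEnergy

variable {α w S : ℝ}

/-- With `ℓ = w ((α-1)/S)^(1/α)` the speed satisfies `(w/ℓ)^α = S/(α-1)`, so the energy
`(w/ℓ)^α ℓ` only involves `S^(1 - 1/α)`. -/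
lemma energy_at_optimal_length (hα : 1 < α) (hw : w ≠ 0) (hS : 0 < S) :
    (w / (w * ((α - 1) / S) ^ (1/α))) ^ α * (w * ((α - 1) / S) ^ (1/α))
      = w / (α - 1) ^ (1 - 1/α) * S ^ (1 - 1/α) := by
  have hA : 0 < α - 1 := by linarith
  have hAS : 0 < (α - 1) / S := div_pos hA hS
  have hr : 0 < ((α - 1) / S) ^ (1/α) := rpow_pos_of_pos hAS _
  have hspeed : w / (w * ((α - 1) / S) ^ (1/α)) = (((α - 1) / S) ^ (1/α))⁻¹ := by
    field_simp
  have hA1 : 0 < (α - 1) ^ (1/α) := rpow_pos_of_pos hA _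
  have hS1 : 0 < S ^ (1/α) := rpow_pos_of_pos hS _
  rw [hspeed, inv_rpow hr.le, ← rpow_mul hAS.le, one_div_mul_cancel (by positivity), rpow_one,
    rpow_sub hA, rpow_sub hS, rpow_one, rpow_one, div_rpow hA.le hS.le]
  field_simp

lemma hasDerivAt_energy_at_optimal_length (hα : 1 < α) (hS : 0 < S) :
    HasDerivAt (fun x => w / (α - 1) ^ (1 - 1/α) * x ^ (1 - 1/α))
      (w * ((α - 1) / S) ^ (1/α) / α) S := by
  have hA : 0 < α - 1 := by linarith
  refine (((hasDerivAt_id' S).rpow_const (p := 1 - 1/α) (Or.inl hS.ne')).const_mul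
    (w / (α - 1) ^ (1 - 1/α))).congr_deriv ?_
  have hA1 : 0 < (α - 1) ^ (1/α) := rpow_pos_of_pos hA _
  have hS1 : 0 < S ^ (1/α) := rpow_pos_of_pos hS _
  rw [show (1 - 1/α - 1 : ℝ) = -(1/α) by ring, rpow_neg hS.le, rpow_sub hA, rpow_one,
    div_rpow hA.le hS.le]
  field_simp

end OptimalEnergy

/-- At the optimal lengths, the energy of job `k` is
`s_k^α ℓ_k = (w_k/(α-1)^(1-1/α))·(∑_{j≥k} p_j)^(1-1/α)`, and for every `k ≤ i`
its derivative with respect to the penalty `p_i` of player `i` equals `ℓ_k/α`. -/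
theorem stmt6 (n : ℕ) (α : ℝ) (hα : 1 < α) (w p : Fin n → ℝ)
    (hw : ∀ j, 0 < w j) (hp : ∀ j, 0 < p j)
    (ℓ : (Fin n → ℝ) → Fin n → ℝ)
    (hℓ : ∀ q k, ℓ q k = w k * ((α - 1) / ∑ j ∈ Finset.Ici k, q j) ^ (1/α))
    (s : (Fin n → ℝ) → Fin n → ℝ)
    (hs : ∀ q k, s q k = w k / ℓ q k)
    (i k : Fin n) (hk : k ≤ i) :
    (s p k) ^ α * ℓ p k
        = w k / (α - 1) ^ (1 - 1/α) * (∑ j ∈ Finset.Ici k, p j) ^ (1 - 1/α)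
    ∧ HasDerivAt (fun t => (s (Function.update p i t) k) ^ α * ℓ (Function.update p i t) k)
        (ℓ p k / α) (p i) := by
  have henergy : ∀ q, 0 < ∑ j ∈ Ici k, q j →
      s q k ^ α * ℓ q k = w k / (α - 1) ^ (1 - 1/α) * (∑ j ∈ Ici k, q j) ^ (1 - 1/α) := by
    intro q hq
    rw [hs, hℓ]
    exact energy_at_optimal_length hα (hw k).ne' hq
  have hS : 0 < ∑ j ∈ Ici k, p j := sum_pos (fun j _ => hp j) ⟨k, mem_Ici.2 le_rfl⟩
  refine ⟨henergy p hS, ?_⟩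
  -- since `k ≤ i`, the tail sum of job `k` depends on `p i` through a translation
  set C := ∑ j ∈ Ici k \ {i}, p j
  have htail : ∀ t, ∑ j ∈ Ici k, Function.update p i t j = t + C :=
    fun t => sum_update_of_mem (mem_Ici.2 hk) _ _
  have hsum : ∑ j ∈ Ici k, p j = p i + C := by simpa using htail (p i)
  have hderiv := (hasDerivAt_energy_at_optimal_length (w := w k) hα (hsum ▸ hS)).comp (p i)
    ((hasDerivAt_id' (p i)).add_const C)
  rw [mul_one, ← hsum, ← hℓ] at hderiv
  refine hderiv.congr_of_eventuallyEq ?_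
  filter_upwards [eventually_gt_nhds (show -C < p i by linarith)] with t ht
  rw [Function.comp_apply, henergy _ (by rw [htail]; linarith), htail]
end

section
/- In the cost-share mechanism, the partial derivative of player i's total penalty (p_i − p̂_i)·Σ_{k=1}^i ℓ_k + α(OPT_π(p̂) − OPT_π(p̂_{−i})) with respect to the announced penalty p̂_i equals (p_i − p̂_i)·Σ_{k=1}^i ∂ℓ_k/∂p̂_i, and since each ∂ℓ_k/∂p̂_i < 0, the penalty is uniquely minimized at p̂_i = p_i (the mechanism is truthful). -/
/-!
Write `t = p̂_i`. For `k ≤ i` the tail sum `x_k = ∑_{j ≥ k} p̂_j` is `t + c_k` with `c_k ≥ 0`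
independent of `t`, and for `k > i` it does not depend on `t` at all. On `x > 0` the energy
`w^α ℓ^(1-α)` of a job at its optimal length is `w (α-1)^(1/α-1) x^(1-1/α)`, whose derivative in
`x` is exactly `ℓ / α` (an envelope identity). Hence `α · d OPT/dt = ∑_{k ≤ i} ℓ_k`, which cancels
the term `-∑_{k ≤ i} ℓ_k` coming from the factor `p_i - t`, leaving `(p_i - t) ∑_{k ≤ i} ∂ℓ_k/∂t`.
Every `∂ℓ_k/∂t` is negative, so the penalty strictly decreases up to `t = p_i` and strictly
increases afterwards.
-/

open Real Finset

namespace CostShare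

variable {α w x : ℝ}

/-- `x` stands for the tail sum `∑_{j ≥ k} p̂_j` of the announced penalties. -/
noncomputable def optLength (α w x : ℝ) : ℝ := w * ((α - 1) / x) ^ (1 / α)

noncomputable def optLengthDeriv (α w x : ℝ) : ℝ :=
  -(w * (α - 1) ^ (1 / α) / α) * x ^ (-(1 / α) - 1)

noncomputable def optEnergy (α w x : ℝ) : ℝ := w ^ α * optLength α w x ^ (1 - α)

theorem optLength_eq (hα : 1 ≤ α) (hx : 0 < x) :
    optLength α w x = w * (α - 1) ^ (1 / α) * x ^ (-(1 / α)) := by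
  rw [optLength, div_rpow (sub_nonneg.2 hα) hx.le, rpow_neg hx.le, div_eq_mul_inv, mul_assoc]

theorem optEnergy_eq (hα : 1 ≤ α) (hw : 0 ≤ w) (hx : 0 < x) :
    optEnergy α w x = w * (α - 1) ^ (1 / α - 1) * x ^ (1 - 1 / α) := by
  have hα0 : α ≠ 0 := by positivity
  have hA : 0 ≤ α - 1 := sub_nonneg.2 hα
  have hw1 : w ^ α * w ^ (1 - α) = w := by
    rw [← rpow_add' hw (by norm_num), add_sub_cancel, rpow_one]
  rw [optEnergy, optLength_eq hα hx, mul_rpow (by positivity) (by positivity),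
    mul_rpow hw (by positivity), ← rpow_mul hA, ← rpow_mul hx.le, ← mul_assoc, ← mul_assoc, hw1,
    show 1 / α * (1 - α) = 1 / α - 1 by field_simp,
    show -(1 / α) * (1 - α) = 1 - 1 / α by field_simp; ring]

theorem hasDerivAt_optLength (hα : 1 ≤ α) (hx : 0 < x) :
    HasDerivAt (optLength α w) (optLengthDeriv α w x) x := by
  have hpow := ((hasDerivAt_rpow_const (p := -(1 / α)) (Or.inl hx.ne')).const_mul
    (w * (α - 1) ^ (1 / α)))
  refine (hpow.congr_deriv (by rw [optLengthDeriv]; ring)).congr_of_eventuallyEq ?_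
  filter_upwards [eventually_gt_nhds hx] with y hy using optLength_eq hα hy

theorem optLengthDeriv_neg (hα : 1 < α) (hw : 0 < w) (hx : 0 < x) :
    optLengthDeriv α w x < 0 := by
  have hA : 0 < α - 1 := sub_pos.2 hα
  rw [optLengthDeriv, neg_mul, neg_lt_zero]
  positivity

theorem hasDerivAt_optEnergy (hα : 1 ≤ α) (hw : 0 ≤ w) (hx : 0 < x) :
    HasDerivAt (optEnergy α w) (optLength α w x / α) x := by
  have hα0 : α ≠ 0 := by positivity
  have hpow := ((hasDerivAt_rpow_const (p := 1 - 1 / α) (Or.inl hx.ne')).const_mul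
    (w * (α - 1) ^ (1 / α - 1)))
  refine (hpow.congr_deriv ?_).congr_of_eventuallyEq ?_
  · have hA : (α - 1) ^ (1 / α) = (α - 1) ^ (1 / α - 1) * (α - 1) := by
      rw [← rpow_add_one' (sub_nonneg.2 hα) (by simpa using hα0), sub_add_cancel]
    rw [optLength_eq hα hx, hA, show 1 - 1 / α - 1 = -(1 / α) by ring]
    field_simp
  · filter_upwards [eventually_gt_nhds hx] with y hy using optEnergy_eq hα hw hy

section TailSums

variable {ι M : Type*} [Preorder ι] [LocallyFiniteOrderTop ι] [DecidableEq ι] [AddCommMonoid M]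
  {p : ι → M} {i k : ι} {t : M}

theorem sum_Ici_update_of_le (hk : k ≤ i) :
    ∑ j ∈ Ici k, Function.update p i t j = t + ∑ j ∈ (Ici k).erase i, p j := by
  rw [sum_update_of_mem (mem_Ici.2 hk), sdiff_singleton_eq_erase]

theorem sum_Ici_update_of_not_le (hk : ¬k ≤ i) :
    ∑ j ∈ Ici k, Function.update p i t j = ∑ j ∈ Ici k, p j :=
  sum_congr rfl fun j hj => Function.update_of_ne (by rintro rfl; exact hk (mem_Ici.1 hj)) _ _

end TailSums

section TailDerivatives

variable {ι : Type*} [Preorder ι] [LocallyFiniteOrderTop ι] [DecidableEq ι]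
  {p : ι → ℝ} {i k : ι} {t : ℝ}

theorem sum_Ici_update_pos (hp : ∀ j, 0 ≤ p j) (ht : 0 < t) (hk : k ≤ i) :
    0 < ∑ j ∈ Ici k, Function.update p i t j := by
  rw [sum_Ici_update_of_le hk]
  exact add_pos_of_pos_of_nonneg ht (sum_nonneg fun j _ => hp j)

theorem hasDerivAt_comp_sum_Ici_update_of_le {f : ℝ → ℝ} {f' : ℝ} (hk : k ≤ i)
    (hf : HasDerivAt f f' (∑ j ∈ Ici k, Function.update p i t j)) :
    HasDerivAt (fun s => f (∑ j ∈ Ici k, Function.update p i s j)) f' t := by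
  simp only [sum_Ici_update_of_le hk] at hf ⊢
  exact hf.comp_add_const _ _

theorem hasDerivAt_sum_comp_sum_Ici_update [Fintype ι] [LocallyFiniteOrderBot ι]
    {f : ι → ℝ → ℝ} {f' : ι → ℝ}
    (hf : ∀ k ≤ i, HasDerivAt (f k) (f' k) (∑ j ∈ Ici k, Function.update p i t j)) :
    HasDerivAt (fun s => ∑ k, f k (∑ j ∈ Ici k, Function.update p i s j))
      (∑ k ∈ Iic i, f' k) t := by
  classical
  rw [← filter_ge_eq_Iic, sum_filter]
  refine HasDerivAt.fun_sum fun k _ => ?_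
  by_cases hk : k ≤ i
  · rw [if_pos hk]
    exact hasDerivAt_comp_sum_Ici_update_of_le hk (hf k hk)
  · simp only [if_neg hk, sum_Ici_update_of_not_le hk]
    exact hasDerivAt_const _ _

theorem hasDerivAt_penalty [Fintype ι] [LocallyFiniteOrderBot ι] {w : ι → ℝ} (hα : 1 ≤ α)
    (hw : ∀ k, 0 ≤ w k) (hp : ∀ j, 0 ≤ p j) (c : ℝ) (ht : 0 < t) :
    HasDerivAt
      (fun s => (p i - s) * ∑ k ∈ Iic i, optLength α (w k) (∑ j ∈ Ici k, Function.update p i s j)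
        + α * (∑ k, optEnergy α (w k) (∑ j ∈ Ici k, Function.update p i s j) - c))
      ((p i - t) * ∑ k ∈ Iic i, optLengthDeriv α (w k) (∑ j ∈ Ici k, Function.update p i t j))
      t := by
  have hlen := HasDerivAt.fun_sum (u := Iic i) fun k hk =>
    hasDerivAt_comp_sum_Ici_update_of_le (mem_Iic.1 hk)
      (hasDerivAt_optLength (w := w k) hα (sum_Ici_update_pos hp ht (mem_Iic.1 hk)))
  have henergy := hasDerivAt_sum_comp_sum_Ici_update (i := i) fun k hk =>
    hasDerivAt_optEnergy hα (hw k) (sum_Ici_update_pos hp ht hk)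
  refine ((((hasDerivAt_id' t).const_sub (p i)).mul hlen).add
    ((henergy.sub_const c).const_mul α)).congr_deriv ?_
  rw [← sum_div, mul_div_cancel₀ _ (by positivity : α ≠ 0)]
  ring

end TailDerivatives

theorem apply_lt_of_hasDerivAt_neg_of_pos {Φ Φ' : ℝ → ℝ} {a b t : ℝ} (hab : b < a)
    (hΦ : ∀ s > b, HasDerivAt Φ (Φ' s) s) (hneg : ∀ s > b, s < a → Φ' s < 0)
    (hpos : ∀ s > a, 0 < Φ' s) (hbt : b < t) (hta : t ≠ a) : Φ a < Φ t := by
  have hcont : ∀ {u v}, b < u → ContinuousOn Φ (Set.Icc u v) := fun hu x hx =>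
    (hΦ x (hu.trans_le hx.1)).continuousAt.continuousWithinAt
  rcases hta.lt_or_gt with hta | hat
  · refine strictAntiOn_of_hasDerivWithinAt_neg (f' := Φ') (convex_Icc t a) (hcont hbt)
      (fun x hx => ?_) (fun x hx => ?_) (Set.left_mem_Icc.2 hta.le)
      (Set.right_mem_Icc.2 hta.le) hta <;> rw [interior_Icc] at hx
    · exact (hΦ x (hbt.trans hx.1)).hasDerivWithinAt
    · exact hneg x (hbt.trans hx.1) hx.2
  · refine strictMonoOn_of_hasDerivWithinAt_pos (f' := Φ') (convex_Icc a t) (hcont hab)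
      (fun x hx => ?_) (fun x hx => ?_) (Set.left_mem_Icc.2 hat.le)
      (Set.right_mem_Icc.2 hat.le) hat <;> rw [interior_Icc] at hx
    · exact (hΦ x (hab.trans hx.1)).hasDerivWithinAt
    · exact hpos x hx.1

end CostShare

open CostShare

theorem stmt8_general (n : ℕ) (α : ℝ) (hα : 1 < α) (w p : Fin n → ℝ)
    (hw : ∀ j, 0 < w j) (hp : ∀ j, 0 < p j) (i : Fin n)
    (q : ℝ → Fin n → ℝ) (hq : ∀ t, q t = Function.update p i t)
    (ℓ : (Fin n → ℝ) → Fin n → ℝ)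
    (hℓ : ∀ r k, ℓ r k = w k * ((α - 1) / ∑ j ∈ Finset.Ici k, r j) ^ (1/α))
    (OPT : (Fin n → ℝ) → ℝ)
    (hOPT : ∀ r, OPT r = ∑ k, (w k) ^ α * (ℓ r k) ^ (1 - α))
    (OPTminus : ℝ)
    (Φ : ℝ → ℝ)
    (hΦ : ∀ t, Φ t = (p i - t) * (∑ k ∈ Finset.Iic i, ℓ (q t) k)
        + α * (OPT (q t) - OPTminus))
    (dℓ : Fin n → ℝ → ℝ)
    (hdℓ : ∀ k t, dℓ k t
        = -(w k * (α - 1) ^ (1/α) / α) * (∑ j ∈ Finset.Ici k, q t j) ^ (-(1/α) - 1)) :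
    (∀ t > (0 : ℝ), HasDerivAt Φ ((p i - t) * ∑ k ∈ Finset.Iic i, dℓ k t) t)
    ∧ (∀ t > (0 : ℝ), ∀ k ≤ i, dℓ k t < 0)
    ∧ (∀ t > (0 : ℝ), t ≠ p i → Φ (p i) < Φ t) := by
  obtain rfl : q = fun t => Function.update p i t := funext hq
  obtain rfl : ℓ = fun r k => optLength α (w k) (∑ j ∈ Ici k, r j) :=
    funext fun r => funext (hℓ r)
  obtain rfl : OPT = fun r => ∑ k, optEnergy α (w k) (∑ j ∈ Ici k, r j) := funext hOPT
  obtain rfl : dℓ = fun k t => optLengthDeriv α (w k) (∑ j ∈ Ici k, Function.update p i t j) :=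
    funext fun k => funext (hdℓ k)
  beta_reduce at hΦ ⊢
  have hp₀ : ∀ j, 0 ≤ p j := fun j => (hp j).le
  have hdℓ_neg : ∀ t > 0, ∀ k ≤ i,
      optLengthDeriv α (w k) (∑ j ∈ Ici k, Function.update p i t j) < 0 :=
    fun t ht k hk => optLengthDeriv_neg hα (hw k) (sum_Ici_update_pos hp₀ ht hk)
  have hsum_neg : ∀ t > 0,
      ∑ k ∈ Iic i, optLengthDeriv α (w k) (∑ j ∈ Ici k, Function.update p i t j) < 0 :=
    fun t ht => sum_neg (fun k hk => hdℓ_neg t ht k (mem_Iic.1 hk)) ⟨i, mem_Iic.2 le_rfl⟩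
  have hderiv : ∀ t > 0, HasDerivAt Φ
      ((p i - t) * ∑ k ∈ Iic i, optLengthDeriv α (w k) (∑ j ∈ Ici k, Function.update p i t j)) t :=
    fun t ht => funext hΦ ▸ hasDerivAt_penalty hα.le (fun k => (hw k).le) hp₀ OPTminus ht
  refine ⟨hderiv, hdℓ_neg, fun t ht hne => apply_lt_of_hasDerivAt_neg_of_pos (hp i) hderiv
    (fun s hs hsp => mul_neg_of_pos_of_neg (sub_pos.2 hsp) (hsum_neg s hs))
    (fun s hs => mul_pos_of_neg_of_neg (sub_neg.2 hs) (hsum_neg s ((hp i).trans hs))) ht hne⟩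

/-- Truthfulness of the mechanism: the derivative of player `i`'s total penalty
with respect to his announced penalty `t = p̂_i` equals
`(p_i − p̂_i)·∑_{k≤i} ∂ℓ_k/∂p̂_i`, each `∂ℓ_k/∂p̂_i < 0`, and hence the penalty
is uniquely minimized at the truthful announcement `p̂_i = p_i`. -/
theorem stmt8 (n : ℕ) (α : ℝ) (hα : 1 < α) (w p : Fin n → ℝ)
    (hw : ∀ j, 0 < w j) (hp : ∀ j, 0 < p j) (i : Fin n)
    (q : ℝ → Fin n → ℝ) (hq : ∀ t, q t = Function.update p i t)
    (ℓ : (Fin n → ℝ) → Fin n → ℝ)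
    (hℓ : ∀ r k, ℓ r k = w k * ((α - 1) / ∑ j ∈ Finset.Ici k, r j) ^ (1/α))
    (OPT : (Fin n → ℝ) → ℝ)
    (hOPT : ∀ r, OPT r = ∑ k, (w k) ^ α * (ℓ r k) ^ (1 - α))
    (OPTminus : ℝ)
    (hOPTminus : OPTminus = ∑ k ∈ Finset.univ.erase i,
        (w k) ^ α * (w k * ((α - 1) / ∑ j ∈ (Finset.Ici k).erase i, p j) ^ (1/α)) ^ (1 - α))
    (Φ : ℝ → ℝ)
    (hΦ : ∀ t, Φ t = (p i - t) * (∑ k ∈ Finset.Iic i, ℓ (q t) k)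
        + α * (OPT (q t) - OPTminus))
    (dℓ : Fin n → ℝ → ℝ)
    (hdℓ : ∀ k t, dℓ k t
        = -(w k * (α - 1) ^ (1/α) / α) * (∑ j ∈ Finset.Ici k, q t j) ^ (-(1/α) - 1)) :
    (∀ t > (0 : ℝ), HasDerivAt Φ ((p i - t) * ∑ k ∈ Finset.Iic i, dℓ k t) t)
    ∧ (∀ t > (0 : ℝ), ∀ k ≤ i, dℓ k t < 0)
    ∧ (∀ t > (0 : ℝ), t ≠ p i → Φ (p i) < Φ t) :=
  stmt8_general n α hα w p hw hp i q hq ℓ hℓ OPT hOPT OPTminus Φ hΦ dℓ hdℓ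
end

section
/- With at least 2 players, the cost share b_i = α(OPT_π(p̂) − OPT_π(p̂_{−i})) − p̂_i C_i of each player i is strictly greater than the energy ℓ_i s_i^α consumed by that player's job. -/
open Real Finset

/-!
Write `U_k` for the total penalty of the jobs from `k` on. The optimal length satisfies
`ℓ_k U_k = (α - 1) E_k`, where `E_k ∝ U_k ^ (1 - 1/α)` is the energy of job `k`; so `E_k` is
strictly concave in `U_k` with derivative `ℓ_k / α`. Removing player `i` lowers `U_k` by `p̂_i`
for every `k < i` and leaves the other jobs unchanged, and `b_i - E_i` splits as
`ℓ_i (U_i - p̂_i) + ∑_{k < i} (α (E_k(U_k) - E_k(U_k - p̂_i)) - p̂_i ℓ_k)`.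
The first term is nonnegative and each summand is positive by strict concavity (tangent line
inequality). With two or more players either some `k < i` exists or `U_i > p̂_i`.
-/

theorem Finset.sum_sub_sum_erase_eq_add_sum_Iio {ι M : Type*} [Fintype ι] [LinearOrder ι]
    [LocallyFiniteOrderBot ι] [AddCommGroup M] (f g : ι → M) (i : ι)
    (hfg : ∀ k, i < k → g k = f k) :
    ∑ k, f k - ∑ k ∈ univ.erase i, g k = f i + ∑ k ∈ Iio i, (f k - g k) := by
  rw [← add_sum_erase univ f (mem_univ i), add_sub_assoc, ← sum_sub_distrib]
  congr 1
  refine (sum_subset (fun k hk => mem_erase.2 ⟨(mem_Iio.1 hk).ne, mem_univ k⟩) ?_).symm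
  intro k hk hki
  rw [hfg k (lt_of_le_of_ne (not_lt.1 (mem_Iio.not.1 hki)) (mem_erase.1 hk).1.symm), sub_self]

theorem Real.rpow_lt_one_add_mul_sub {β t : ℝ} (hβ0 : 0 < β) (hβ1 : β < 1) (ht0 : 0 ≤ t)
    (ht1 : t ≠ 1) : t ^ β < 1 + β * (t - 1) := by
  simpa using rpow_one_add_lt_one_add_mul_self (s := t - 1) (by linarith) (sub_ne_zero.2 ht1)
    hβ0 hβ1

theorem sub_sum_Iic_sub_eq_add_sum_Iio {ι : Type*} [Fintype ι] [LinearOrder ι]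
    [LocallyFiniteOrderBot ι] (α c : ℝ) (E E' ℓ : ι → ℝ) (i : ι)
    (hE : ∀ k, i < k → E' k = E k) :
    α * (∑ k, E k - ∑ k ∈ univ.erase i, E' k) - c * ∑ k ∈ Iic i, ℓ k - E i
      = ((α - 1) * E i - c * ℓ i) + ∑ k ∈ Iio i, (α * (E k - E' k) - c * ℓ k) := by
  rw [sum_sub_sum_erase_eq_add_sum_Iio E E' i hE, ← Iio_insert, sum_insert (by simp)]
  simp only [sum_sub_distrib, ← mul_sum]
  ring

noncomputable def optLength (α W U : ℝ) : ℝ := W * ((α - 1) / U) ^ (1 / α)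

section optLength

variable {α W U : ℝ}

theorem optLength_pos (hα : 1 < α) (hW : 0 < W) (hU : 0 < U) : 0 < optLength α W U := by
  have : 0 < α - 1 := by linarith
  unfold optLength; positivity

theorem optLength_mul_div_rpow (hα : 1 < α) (hW : 0 < W) (hU : 0 < U) :
    optLength α W U * (W / optLength α W U) ^ α = optLength α W U * U / (α - 1) := by
  have hα1 : 0 < α - 1 := by linarith
  have hr : 0 ≤ (α - 1) / U := by positivity
  have hpow : (((α - 1) / U) ^ (1 / α)) ^ α = (α - 1) / U := by
    rw [one_div, rpow_inv_rpow hr (by linarith)]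
  rw [optLength, div_mul_cancel_left₀ hW.ne', inv_rpow (by positivity), hpow, inv_div,
    mul_div_assoc]

theorem optLength_mul_eq {P Q : ℝ} (hα : 1 < α) (hP : 0 < P) (hQ : 0 < Q) :
    optLength α W Q * Q = optLength α W P * P * (Q / P) ^ (1 - 1 / α) := by
  have hα1 : 0 ≤ α - 1 := by linarith
  have hsplit : (α - 1) / Q = (α - 1) / P * (Q / P)⁻¹ := by field_simp
  rw [optLength, optLength, hsplit, mul_rpow (by positivity) (by positivity),
    rpow_sub (by positivity), rpow_one, inv_rpow (by positivity)]
  field_simp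

theorem sub_mul_optLength_lt {P Q : ℝ} (hα : 1 < α) (hW : 0 < W) (hQ : 0 < Q) (hQP : Q < P) :
    (P - Q) * optLength α W P
      < α * (optLength α W P * P / (α - 1) - optLength α W Q * Q / (α - 1)) := by
  have hα1 : 0 < α - 1 := by linarith
  have hP : 0 < P := hQ.trans hQP
  have hL := optLength_pos hα hW hP
  have hβ0 : 0 < 1 - 1 / α := by rw [sub_pos, div_lt_one (by linarith)]; exact hα
  have hβ1 : 1 - 1 / α < 1 := sub_lt_self 1 (by positivity)
  have ht1 : Q / P ≠ 1 := (div_lt_one hP).2 hQP |>.ne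
  have hbern := rpow_lt_one_add_mul_sub hβ0 hβ1 (div_pos hQ hP).le ht1
  rw [optLength_mul_eq hα hP hQ]
  set L := optLength α W P
  set t := Q / P
  have hQt : Q = t * P := by simp only [t]; field_simp
  rw [hQt, ← sub_pos]
  have key : α * (L * P / (α - 1) - L * P * t ^ (1 - 1 / α) / (α - 1)) - (P - t * P) * L
      = α * L * P / (α - 1) * (1 + (1 - 1 / α) * (t - 1) - t ^ (1 - 1 / α)) := by
    field_simp; ring
  rw [key]
  have : 0 < 1 + (1 - 1 / α) * (t - 1) - t ^ (1 - 1 / α) := by linarith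
  positivity

end optLength

/-- With at least 2 players, the cost share `b_i` of each player `i` strictly
exceeds the energy `ℓ_i s_i^α` consumed by his job. -/
theorem stmt9 (n : ℕ) (hn : 2 ≤ n) (α : ℝ) (hα : 1 < α) (w p : Fin n → ℝ)
    (hw : ∀ j, 0 < w j) (hp : ∀ j, 0 < p j)
    (ℓ : Fin n → ℝ)
    (hℓ : ∀ k, ℓ k = w k * ((α - 1) / ∑ j ∈ Finset.Ici k, p j) ^ (1/α))
    (s : Fin n → ℝ) (hs : ∀ k, s k = w k / ℓ k)
    (OPT : ℝ) (hOPT : OPT = ∑ k, ℓ k * (s k) ^ α)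
    (i : Fin n)
    (ℓ' : Fin n → ℝ)
    (hℓ' : ∀ k, ℓ' k = w k * ((α - 1) / ∑ j ∈ (Finset.Ici k).erase i, p j) ^ (1/α))
    (OPT' : ℝ) (hOPT' : OPT' = ∑ k ∈ Finset.univ.erase i, ℓ' k * (w k / ℓ' k) ^ α)
    (b : ℝ) (hb : b = α * (OPT - OPT') - p i * ∑ k ∈ Finset.Iic i, ℓ k) :
    b > ℓ i * (s i) ^ α := by
  set P : Fin n → ℝ := fun k => ∑ j ∈ Ici k, p j
  set Q : Fin n → ℝ := fun k => ∑ j ∈ (Ici k).erase i, p j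
  have hP : ∀ k, 0 < P k := fun k => sum_pos (fun j _ => hp j) ⟨k, mem_Ici.2 le_rfl⟩
  have hQ : ∀ k < i, 0 < Q k := fun k hk =>
    sum_pos (fun j _ => hp j) ⟨k, mem_erase.2 ⟨hk.ne, mem_Ici.2 le_rfl⟩⟩
  have hPQ : ∀ k ≤ i, P k - Q k = p i := fun k hk =>
    sub_eq_of_eq_add' (sum_erase_add _ _ (mem_Ici.2 hk)).symm
  have hE : ∀ k, ℓ k * s k ^ α = ℓ k * P k / (α - 1) := fun k => by
    rw [hs, hℓ k]; exact optLength_mul_div_rpow hα (hw k) (hP k)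
  have hE'_lt : ∀ k < i, ℓ' k * (w k / ℓ' k) ^ α = ℓ' k * Q k / (α - 1) := fun k hk => by
    rw [hℓ' k]; exact optLength_mul_div_rpow hα (hw k) (hQ k hk)
  have hE'_gt : ∀ k, i < k → ℓ' k * (w k / ℓ' k) ^ α = ℓ k * s k ^ α := fun k hk => by
    rw [hs, hℓ k, hℓ' k, erase_eq_of_notMem (fun h => (mem_Ici.1 h).not_gt hk)]
  have hterm : ∀ k ∈ Iio i,
      0 < α * (ℓ k * s k ^ α - ℓ' k * (w k / ℓ' k) ^ α) - p i * ℓ k := fun k hk => by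
    have hki := mem_Iio.1 hk
    have hQP : Q k < P k := by linarith [hPQ k hki.le, hp i]
    rw [hE k, hE'_lt k hki, sub_pos, ← hPQ k hki.le, hℓ k, hℓ' k]
    exact sub_mul_optLength_lt hα (hw k) (hQ k hki) hQP
  have hℓi : 0 < ℓ i := by rw [hℓ i]; exact optLength_pos hα (hw i) (hP i)
  have hown : (α - 1) * (ℓ i * s i ^ α) - p i * ℓ i = ℓ i * Q i := by
    have hα1 : α - 1 ≠ 0 := by linarith
    rw [hE i, ← hPQ i le_rfl]
    field_simp
    ring
  have := Fin.nontrivial_iff_two_le.2 hn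
  obtain ⟨j, hji⟩ := exists_ne i
  rw [gt_iff_lt, ← sub_pos, hb, hOPT, hOPT', sub_sum_Iic_sub_eq_add_sum_Iio _ _ _ _ _ i hE'_gt,
    hown]
  rcases hji.lt_or_gt with hji | hij
  · have hQi : 0 ≤ Q i := sum_nonneg fun j _ => (hp j).le
    exact add_pos_of_nonneg_of_pos (mul_nonneg hℓi.le hQi) (sum_pos hterm ⟨j, mem_Iio.2 hji⟩)
  · have hQi : 0 < Q i := sum_pos (fun j _ => hp j) ⟨j, mem_erase.2 ⟨hij.ne', mem_Ici.2 hij.le⟩⟩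
    exact add_pos_of_pos_of_nonneg (mul_pos hℓi hQi) (sum_nonneg fun k hk => (hterm k hk).le)
end

section
/- At the optimal lengths, the weighted flow time equals (α−1) times the energy: Σ_j p_j Σ_{k=1}^j ℓ_k = (α−1)·Σ_j w_j^α ℓ_j^(1−α). Consequently the minimal social cost equals α times its energy component. -/
/-!
Exchanging the order of summation writes the flow time as `F = ∑ₖ Pₖ ℓₖ`, where
`Pₖ = ∑_{j ≥ k} pⱼ` is the penalty still waiting while job `k` runs. With `t = (α - 1) / Pₖ`
the optimal length is `ℓₖ = wₖ t^(1/α)`, so job `k`'s energy is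
`wₖ^α ℓₖ^(1-α) = ℓₖ / t = Pₖ ℓₖ / (α - 1)`; summing over `k` gives `F = (α - 1) E`.
-/

open Real Finset

theorem Finset.sum_Iic_sum_comm {ι M : Type*} [Preorder ι] [Fintype ι]
    [LocallyFiniteOrderBot ι] [LocallyFiniteOrderTop ι] [AddCommMonoid M] (f : ι → ι → M) :
    ∑ j, ∑ k ∈ Iic j, f j k = ∑ k, ∑ j ∈ Ici k, f j k :=
  Finset.sum_comm' fun j k => by simp

theorem rpow_mul_mul_rpow_one_div_rpow_one_sub {w t α : ℝ} (hw : 0 < w) (ht : 0 < t) (hα : α ≠ 0) :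
    w ^ α * (w * t ^ (1 / α)) ^ (1 - α) = w * t ^ (1 / α) / t := by
  have hw_pow : w ^ α * w ^ (1 - α) = w := by
    rw [← rpow_add hw, add_sub_cancel, rpow_one]
  have ht_pow : (t ^ (1 / α)) ^ (1 - α) = t ^ (1 / α) / t := by
    rw [← rpow_mul ht.le, show 1 / α * (1 - α) = 1 / α - 1 by field_simp, rpow_sub ht, rpow_one]
  rw [mul_rpow hw.le (rpow_nonneg ht.le _), ht_pow, ← mul_assoc, hw_pow, mul_div_assoc]

theorem mul_optimal_length_eq {w S α : ℝ} (hw : 0 < w) (hS : 0 < S) (hα : 1 < α) :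
    S * (w * ((α - 1) / S) ^ (1 / α))
      = (α - 1) * (w ^ α * (w * ((α - 1) / S) ^ (1 / α)) ^ (1 - α)) := by
  have ht : 0 < (α - 1) / S := div_pos (by linarith) hS
  have hα1 : α - 1 ≠ 0 := by linarith
  rw [rpow_mul_mul_rpow_one_div_rpow_one_sub hw ht (by linarith)]
  field_simp

/-- At the optimal lengths, the flow time equals `(α−1)` times the energy, and
hence the minimal social cost `E + F` equals `α·E`. -/
theorem stmt12 (n : ℕ) (α : ℝ) (hα : 1 < α) (w p : Fin n → ℝ)
    (hw : ∀ j, 0 < w j) (hp : ∀ j, 0 < p j)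
    (ℓ : Fin n → ℝ)
    (hℓ : ∀ j, ℓ j = w j * ((α - 1) / ∑ k ∈ Finset.Ici j, p k) ^ (1/α))
    (E F : ℝ)
    (hE : E = ∑ j, (w j) ^ α * (ℓ j) ^ (1 - α))
    (hF : F = ∑ j, p j * ∑ k ∈ Finset.Iic j, ℓ k) :
    F = (α - 1) * E ∧ E + F = α * E := by
  have hF_swap : F = ∑ k, (∑ j ∈ Ici k, p j) * ℓ k := by
    simp only [hF, mul_sum, sum_mul, sum_Iic_sum_comm fun j k => p j * ℓ k]
  have hflow : F = (α - 1) * E := by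
    rw [hF_swap, hE, mul_sum]
    refine sum_congr rfl fun k _ => ?_
    have hS : 0 < ∑ j ∈ Ici k, p j := sum_pos (fun j _ => hp j) ⟨k, mem_Ici.mpr le_rfl⟩
    rw [hℓ k]
    exact mul_optimal_length_eq (hw k) hS hα
  exact ⟨hflow, by rw [hflow]; ring⟩
end

section
/- At the optimal lengths, the optimal speed of job j satisfies s_j^α = (Σ_{k=j}^n p_k)/(α−1); in particular speeds are nonincreasing along the processing order (s_1 ≥ s_2 ≥ ... ≥ s_n). -/
open Real Finset

theorem Finset.antitone_sum_Ici {ι M : Type*} [Preorder ι] [LocallyFiniteOrderTop ι]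
    [AddCommMonoid M] [PartialOrder M] [IsOrderedAddMonoid M] {f : ι → M} (hf : ∀ i, 0 ≤ f i) :
    Antitone fun j => ∑ k ∈ Ici j, f k :=
  fun _ _ hij => sum_le_sum_of_subset_of_nonneg (Ici_subset_Ici.mpr hij) fun k _ _ => hf k

theorem Real.div_mul_rpow_self {w x : ℝ} (hw : w ≠ 0) (hx : 0 ≤ x) (y : ℝ) :
    w / (w * x ^ y) = x⁻¹ ^ y := by
  rw [div_mul_eq_div_div, div_self hw, one_div, inv_rpow hx]

/-- At the optimal lengths, `s_j^α = (∑_{k≥j} p_k)/(α−1)`, and the speeds are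
nonincreasing along the processing order. -/
theorem stmt13 (n : ℕ) (α : ℝ) (hα : 1 < α) (w p : Fin n → ℝ)
    (hw : ∀ j, 0 < w j) (hp : ∀ j, 0 < p j)
    (ℓ : Fin n → ℝ)
    (hℓ : ∀ j, ℓ j = w j * ((α - 1) / ∑ k ∈ Finset.Ici j, p k) ^ (1/α))
    (s : Fin n → ℝ) (hs : ∀ j, s j = w j / ℓ j) :
    (∀ j, (s j) ^ α = (∑ k ∈ Finset.Ici j, p k) / (α - 1)) ∧ Antitone s := by
  have hα1 : 0 < α - 1 := sub_pos.mpr hα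
  have htail_pos : ∀ j, 0 < ∑ k ∈ Ici j, p k := fun j =>
    sum_pos (fun k _ => hp k) nonempty_Ici
  have hspeed : ∀ j, s j = ((∑ k ∈ Ici j, p k) / (α - 1)) ^ (1 / α) := fun j => by
    rw [hs, hℓ, div_mul_rpow_self (hw j).ne' (div_pos hα1 (htail_pos j)).le, inv_div]
  refine ⟨fun j => ?_, fun i j hij => ?_⟩
  · rw [hspeed, one_div, rpow_inv_rpow (div_pos (htail_pos j) hα1).le (by positivity)]
  · rw [hspeed, hspeed]
    exact rpow_le_rpow (div_pos (htail_pos j) hα1).le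
      (div_le_div_of_nonneg_right (antitone_sum_Ici (fun k => (hp k).le) hij) hα1.le)
      (by positivity)
end

section
/- For all k < i, the difference of energies satisfies α·(ℓ_k s_k^α − ℓ'_k s'^α_k) − ℓ_k p̂_i > 0, where primed quantities are computed with player i's penalty removed. -/
open Real Finset

/-!
With `β = 1 - 1/α ∈ (0, 1)` and `c = w_k / (α - 1)^β`, the energy difference is
`c (P^β - (P - p̂_i)^β)`, while `ℓ_k = α β c P^(β - 1)` is `α c` times the derivative of `x ↦ x^β`
at `P`. Since `0 < P - p̂_i < P`, strict concavity of `x ↦ x^β` (Bernoulli's inequality) puts the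
secant slope above the tangent slope, which is the claim.
-/

namespace Real

theorem mul_rpow_sub_one_mul_sub_lt_rpow_sub_rpow {β x y : ℝ} (hβ0 : 0 < β) (hβ1 : β < 1)
    (hy : 0 ≤ y) (hyx : y < x) : β * x ^ (β - 1) * (x - y) < x ^ β - y ^ β := by
  have hx : 0 < x := hy.trans_lt hyx
  have hbern : (y / x) ^ β < 1 + β * (y / x - 1) := by
    simpa using rpow_one_add_lt_one_add_mul_self (s := y / x - 1)
      (by linarith [div_nonneg hy hx.le])
      (sub_ne_zero.2 ((div_lt_one hx).2 hyx).ne) hβ0 hβ1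
  have hxβ : 0 < x ^ β := rpow_pos_of_pos hx β
  calc β * x ^ (β - 1) * (x - y) = x ^ β * (1 - (1 + β * (y / x - 1))) := by
        rw [rpow_sub_one hx.ne']; field_simp; ring
    _ < x ^ β * (1 - (y / x) ^ β) := by gcongr
    _ = x ^ β - y ^ β := by
        rw [div_rpow hy hx.le]; field_simp

theorem div_rpow_eq_div_rpow_one_sub_mul_rpow {a x : ℝ} (ha : 0 < a) (hx : 0 < x) (γ : ℝ) :
    (a / x) ^ γ = a / a ^ (1 - γ) * x ^ ((1 - γ) - 1) := by
  have ha_div : a / a ^ (1 - γ) = a ^ γ := by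
    rw [div_eq_iff (rpow_pos_of_pos ha _).ne', ← rpow_add ha, add_sub_cancel, rpow_one]
  rw [ha_div, div_rpow ha.le hx.le, sub_sub_cancel_left, rpow_neg hx.le, div_eq_mul_inv]

end Real

/-- For `k < i`, the energy difference satisfies
`α(ℓ_k s_k^α − ℓ'_k s'^α_k) − ℓ_k p̂_i > 0`, where `P_k = ∑_{j≥k} p̂_j`,
`ℓ_k s_k^α = (w_k/(α−1)^(1−1/α)) P_k^(1−1/α)`,
`ℓ'_k s'^α_k = (w_k/(α−1)^(1−1/α)) (P_k − p̂_i)^(1−1/α)`, and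
`ℓ_k = w_k((α−1)/P_k)^(1/α)`. -/
theorem stmt15 (n : ℕ) (α : ℝ) (hα : 1 < α) (w p : Fin n → ℝ)
    (hw : ∀ j, 0 < w j) (hp : ∀ j, 0 < p j)
    (i k : Fin n) (hki : k < i)
    (P : ℝ) (hP : P = ∑ j ∈ Finset.Ici k, p j)
    (Ek : ℝ) (hEk : Ek = w k / (α - 1) ^ (1 - 1/α) * P ^ (1 - 1/α))
    (Ek' : ℝ) (hEk' : Ek' = w k / (α - 1) ^ (1 - 1/α) * (P - p i) ^ (1 - 1/α))
    (ℓk : ℝ) (hℓk : ℓk = w k * ((α - 1) / P) ^ (1/α)) :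
    α * (Ek - Ek') - ℓk * p i > 0 := by
  have hpi_lt_P : p i < P :=
    hP ▸ single_lt_sum hki.ne (mem_Ici.2 hki.le) (mem_Ici.2 le_rfl) (hp k) fun j _ _ => (hp j).le
  have hP0 : 0 < P := (hp i).trans hpi_lt_P
  have hα0 : 0 < α := by linarith
  set β := 1 - 1 / α
  have hβ0 : 0 < β := by have := (div_lt_one hα0).2 hα; linarith
  have hβ1 : β < 1 := by linarith [one_div_pos.2 hα0]
  have hαβ : α * β = α - 1 := by simp only [β]; field_simp
  set c := w k / (α - 1) ^ β
  have hc : 0 < c := div_pos (hw k) (rpow_pos_of_pos (by linarith) β)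
  have hℓk' : ℓk = α * β * c * P ^ (β - 1) := by
    rw [hℓk, div_rpow_eq_div_rpow_one_sub_mul_rpow (by linarith) hP0, hαβ]; ring
  have hconc := mul_rpow_sub_one_mul_sub_lt_rpow_sub_rpow hβ0 hβ1 (sub_pos.2 hpi_lt_P).le
    (sub_lt_self P (hp i))
  rw [sub_sub_cancel] at hconc
  rw [hEk, hEk', hℓk', gt_iff_lt, sub_pos]
  calc α * β * c * P ^ (β - 1) * p i = α * c * (β * P ^ (β - 1) * p i) := by ring
    _ < α * c * (P ^ β - (P - p i) ^ β) := by gcongr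
    _ = α * (c * P ^ β - c * (P - p i) ^ β) := by ring
end

section
/- At the optimal lengths, player i's cost share equals b_i = ℓ_i(α s_i^α − p̂_i) + Σ_{k=1}^{i-1} [ α(ℓ_k s_k^α − ℓ'_k s'^α_k) − ℓ_k p̂_i ], and the leading term satisfies ℓ_i(α s_i^α − p̂_i) = ℓ_i(s_i^α + Σ_{k=i+1}^n p̂_k) > ℓ_i s_i^α when i < n. -/
/-!
The optimal speeds are explicit: `s_k^α = (∑_{j ≥ k} p̂_j)/(α - 1)`. Removing job `i` only
changes the lengths of the jobs before it, so `OPT - OPT'` is `ℓ_i s_i^α` plus the changes on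
`k < i`, which gives the decomposition of `b_i`. Writing `∑_{j ≥ i} p̂_j = p̂_i + ∑_{j > i} p̂_j`,
the leading coefficient is `α s_i^α - p̂_i = s_i^α + ((α - 1) s_i^α - p̂_i) = s_i^α + ∑_{j > i} p̂_j`.
-/

open Real Finset

lemma Real.div_mul_rpow_one_div_rpow {w c α : ℝ} (hw : w ≠ 0) (hc : 0 ≤ c) (hα : α ≠ 0) :
    (w / (w * c ^ (1 / α))) ^ α = c⁻¹ := by
  rw [div_mul_cancel_left₀ hw, Real.inv_rpow (by positivity), one_div,
    Real.rpow_inv_rpow hc hα]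

lemma Finset.erase_Ici_of_lt {ι : Type*} [LinearOrder ι] [LocallyFiniteOrderTop ι] {i k : ι}
    (hik : i < k) : (Ici k).erase i = Ici k :=
  erase_eq_of_notMem (by simpa using hik)

section Intervals

variable {ι : Type*} [Fintype ι] [LinearOrder ι] [LocallyFiniteOrderBot ι]
  [LocallyFiniteOrderTop ι]

lemma Finset.erase_univ_eq_Iio_union_Ioi (i : ι) : univ.erase i = Iio i ∪ Ioi i := by
  ext k
  simp

lemma Finset.sum_sub_sum_erase_of_eq_of_lt {M : Type*} [AddCommGroup M] {f g : ι → M} (i : ι)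
    (hfg : ∀ k, i < k → g k = f k) :
    ∑ k, f k - ∑ k ∈ univ.erase i, g k = f i + ∑ k ∈ Iio i, (f k - g k) := by
  have hdisj : Disjoint (Iio i) (Ioi i) :=
    disjoint_left.mpr fun k hk hk' => (mem_Iio.mp hk).not_gt (mem_Ioi.mp hk')
  have hIoi : ∑ k ∈ Ioi i, (f k - g k) = 0 :=
    sum_eq_zero fun k hk => by rw [hfg k (mem_Ioi.mp hk), sub_self]
  rw [← add_sum_erase _ _ (mem_univ i), add_sub_assoc, ← sum_sub_distrib,
    erase_univ_eq_Iio_union_Ioi, sum_union hdisj, hIoi, add_zero]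

end Intervals

lemma rpow_optimal_speed {w α S : ℝ} (hw : w ≠ 0) (hα : 1 < α) (hS : 0 < S) :
    (w / (w * ((α - 1) / S) ^ (1 / α))) ^ α = S / (α - 1) := by
  rw [Real.div_mul_rpow_one_div_rpow hw (div_pos (by linarith) hS).le (by positivity), inv_div]

lemma mul_sub_eq_add_of_eq_add_div {α x p T : ℝ} (hα : α ≠ 1) (hx : x = (p + T) / (α - 1)) :
    α * x - p = x + T := by
  have : (α - 1) * x = p + T := by rw [hx]; field_simp [sub_ne_zero.mpr hα]
  linear_combination this

/-- Player `i`'s cost share decomposes as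
`b_i = ℓ_i(α s_i^α − p̂_i) + ∑_{k<i} [α(ℓ_k s_k^α − ℓ'_k s'^α_k) − ℓ_k p̂_i]`,
the leading term equals `ℓ_i(s_i^α + ∑_{k>i} p̂_k)`, and it strictly exceeds
`ℓ_i s_i^α` when `i` is not the last job. -/
theorem stmt16 (n : ℕ) (α : ℝ) (hα : 1 < α) (w p : Fin n → ℝ)
    (hw : ∀ j, 0 < w j) (hp : ∀ j, 0 < p j) (i : Fin n)
    (ℓ : Fin n → ℝ)
    (hℓ : ∀ k, ℓ k = w k * ((α - 1) / ∑ j ∈ Finset.Ici k, p j) ^ (1/α))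
    (s : Fin n → ℝ) (hs : ∀ k, s k = w k / ℓ k)
    (OPT : ℝ) (hOPT : OPT = ∑ k, ℓ k * (s k) ^ α)
    (ℓ' : Fin n → ℝ)
    (hℓ' : ∀ k, ℓ' k = w k * ((α - 1) / ∑ j ∈ (Finset.Ici k).erase i, p j) ^ (1/α))
    (OPT' : ℝ) (hOPT' : OPT' = ∑ k ∈ Finset.univ.erase i, ℓ' k * (w k / ℓ' k) ^ α)
    (b : ℝ) (hb : b = α * (OPT - OPT') - p i * ∑ k ∈ Finset.Iic i, ℓ k) :
    b = ℓ i * (α * (s i) ^ α - p i)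
        + ∑ k ∈ Finset.Iio i,
            (α * (ℓ k * (s k) ^ α - ℓ' k * (w k / ℓ' k) ^ α) - ℓ k * p i)
    ∧ ℓ i * (α * (s i) ^ α - p i)
        = ℓ i * ((s i) ^ α + ∑ k ∈ Finset.Ioi i, p k)
    ∧ ((i : ℕ) + 1 < n → ℓ i * (α * (s i) ^ α - p i) > ℓ i * (s i) ^ α) := by
  have hsα : (s i) ^ α = (p i + ∑ k ∈ Ioi i, p k) / (α - 1) := by
    rw [hs, hℓ, rpow_optimal_speed (hw i).ne' hα (sum_pos (fun j _ => hp j) nonempty_Ici),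
      ← Ioi_insert, sum_insert notMem_Ioi_self]
  have hlead := congrArg (ℓ i * ·) (mul_sub_eq_add_of_eq_add_div hα.ne' hsα)
  have hOPT_sub : OPT - OPT' = ℓ i * (s i) ^ α
      + ∑ k ∈ Iio i, (ℓ k * (s k) ^ α - ℓ' k * (w k / ℓ' k) ^ α) := by
    rw [hOPT, hOPT', sum_sub_sum_erase_of_eq_of_lt i fun k hik => by
      rw [hs, hℓ', hℓ, erase_Ici_of_lt hik]]
  refine ⟨?_, hlead, fun hin => ?_⟩
  · rw [hb, hOPT_sub, ← Iio_insert, sum_insert notMem_Iio_self]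
    simp only [sum_sub_distrib, ← mul_sum, ← sum_mul]
    ring
  · have hℓi : 0 < ℓ i := by
      rw [hℓ]
      exact mul_pos (hw i) (rpow_pos_of_pos (div_pos (by linarith)
        (sum_pos (fun j _ => hp j) nonempty_Ici)) _)
    have hT : 0 < ∑ k ∈ Ioi i, p k :=
      sum_pos (fun k _ => hp k) ⟨⟨i + 1, hin⟩, mem_Ioi.mpr (Fin.lt_def.mpr i.val.lt_succ_self)⟩
    rw [hlead]
    exact mul_lt_mul_of_pos_left (lt_add_of_pos_right _ hT) hℓi
end
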